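/- If every sublocalization overring B of an integral domain A is a localization of A, then for each x in the fraction field K with x ∉ A, the radical of the denominator ideal (A :_A x) is the radical of a principal ideal of A. -/

import Mathlib

/-- The localization `A_P` of a subring `A` of a field `K` at a prime `P`,
viewed as a subset of `K`. -/
def locAt {K : Type*} [Field K] (A : Subring K) (P : Ideal A) : Set K :=
  {x : K | ∃ a s : A, s ∉ P ∧ x = (a : K) / (s : K)}

/-- `B = S⁻¹A` for a multiplicatively closed set `S ⊆ A` of nonzero elements. -/
def IsLocOf {K : Type*} [Field K] (A B : Set K) : Prop :=
  ∃ S : Set K, S ⊆ A ∧ 1 ∈ S ∧ (∀ s ∈ S, ∀ t ∈ S, s * t ∈ S) ∧ (0 : K) ∉ S ∧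
    B = {x : K | ∃ a ∈ A, ∃ s ∈ S, x = a / s}

/-- The denominator ideal `(A :_A x) = {a ∈ A : a * x ∈ A}`. -/
def denomIdeal {K : Type*} [Field K] (A : Subring K) (x : K) : Ideal A where
  carrier := {a : A | (a : K) * x ∈ A}
  add_mem' := by
    intro a b ha hb
    simp only [Set.mem_setOf_eq] at *
    push_cast
    rw [add_mul]
    exact A.add_mem ha hb
  zero_mem' := by
    simp only [Set.mem_setOf_eq]
    push_cast
    rw [zero_mul]
    exact A.zero_mem
  smul_mem' := by
    intro c a ha
    simp only [Set.mem_setOf_eq, smul_eq_mul] at *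
    push_cast
    rw [mul_assoc]
    exact A.mul_mem c.2 ha

/-! Let `I = (A :_A x)` and let `B` be the intersection of the `A_P` over the primes `P ⊉ I`.
Then `x ∈ B`, and by hypothesis `B = S⁻¹A`, so `x = a / s` with `s ∈ S`. Now `s ∈ I`, and
`1 / s ∈ B` means `s` lies in no prime `P ⊉ I`; so every prime containing `s` contains `I`,
i.e. `√I = √(s)`. -/

theorem Ideal.radical_eq_radical_span_singleton_of_forall_isPrime {R : Type*} [CommRing R]
    {I : Ideal R} {c : R} (hc : c ∈ I) (h : ∀ P : Ideal R, P.IsPrime → c ∈ P → I ≤ P) :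
    I.radical = (Ideal.span {c}).radical := by
  refine le_antisymm ?_ (Ideal.radical_mono (Ideal.span_singleton_le_iff_mem _ |>.mpr hc))
  rw [Ideal.radical_le_radical_iff, Ideal.radical_eq_sInf]
  exact le_sInf fun P ⟨hcP, hP⟩ => h P hP (hcP (Ideal.mem_span_singleton_self c))

section Localization

variable {K : Type*} [Field K] {A : Subring K}

theorem coe_ne_zero_of_notMem {P : Ideal A} {s : A} (hs : s ∉ P) : (s : K) ≠ 0 := by
  rintro h
  rw [show s = 0 from Subtype.ext h] at hs
  exact hs P.zero_mem

theorem mem_locAt_of_mul_mem {P : Ideal A} {x : K} {s : A} (hs : s ∉ P) (hsx : (s : K) * x ∈ A) :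
    x ∈ locAt A P :=
  ⟨⟨_, hsx⟩, s, hs, (mul_div_cancel_left₀ x (coe_ne_zero_of_notMem hs)).symm⟩

theorem notMem_of_inv_mem_locAt {P : Ideal A} {s : A} (hs0 : (s : K) ≠ 0)
    (hs : (s : K)⁻¹ ∈ locAt A P) : s ∉ P := by
  obtain ⟨a, t, htP, heq⟩ := hs
  have hts : t = a * s := Subtype.ext <| by
    push_cast
    field_simp [coe_ne_zero_of_notMem htP] at heq
    rw [heq, mul_comm]
  exact fun hsP => htP (hts ▸ P.mul_mem_left a hsP)

variable (A) in
def locSubring (P : Ideal A) (hP : P.IsPrime) : Subring K where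
  carrier := locAt A P
  one_mem' := ⟨1, 1, P.ne_top_iff_one.mp hP.ne_top, by push_cast; rw [div_one]⟩
  zero_mem' := ⟨0, 1, P.ne_top_iff_one.mp hP.ne_top, by push_cast; rw [zero_div]⟩
  mul_mem' := by
    rintro y z ⟨a, s, hs, rfl⟩ ⟨b, t, ht, rfl⟩
    refine ⟨a * b, s * t, fun h => ?_, by push_cast; rw [div_mul_div_comm]⟩
    exact (hP.mem_or_mem h).elim hs ht
  add_mem' := by
    rintro y z ⟨a, s, hs, rfl⟩ ⟨b, t, ht, rfl⟩
    refine ⟨a * t + s * b, s * t, fun h => ?_, by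
      push_cast
      rw [div_add_div _ _ (coe_ne_zero_of_notMem hs) (coe_ne_zero_of_notMem ht)]⟩
    exact (hP.mem_or_mem h).elim hs ht
  neg_mem' := by
    rintro y ⟨a, s, hs, rfl⟩
    exact ⟨-a, s, hs, by push_cast; rw [neg_div]⟩

variable (A) in
def sublocalization (PP : Set (Ideal A)) (hPP : ∀ P ∈ PP, P.IsPrime) : Subring K where
  carrier := {y | ∀ P ∈ PP, y ∈ locAt A P}
  one_mem' P hP := (locSubring A P (hPP P hP)).one_mem
  zero_mem' P hP := (locSubring A P (hPP P hP)).zero_mem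
  mul_mem' hy hz P hP := (locSubring A P (hPP P hP)).mul_mem (hy P hP) (hz P hP)
  add_mem' hy hz P hP := (locSubring A P (hPP P hP)).add_mem (hy P hP) (hz P hP)
  neg_mem' hy P hP := (locSubring A P (hPP P hP)).neg_mem (hy P hP)

theorem le_sublocalization {PP : Set (Ideal A)} (hPP : ∀ P ∈ PP, P.IsPrime) :
    A ≤ sublocalization A PP hPP := fun a ha P hP =>
  ⟨⟨a, ha⟩, 1, P.ne_top_iff_one.mp (hPP P hP).ne_top, (div_one a).symm⟩

end Localization

theorem IsLocOf.exists_mul_mem_inv_mem {K : Type*} [Field K] {A : Subring K} {B : Set K}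
    (hB : IsLocOf (A : Set K) B) {x : K} (hx : x ∈ B) :
    ∃ s ∈ A, s ≠ 0 ∧ s * x ∈ A ∧ s⁻¹ ∈ B := by
  obtain ⟨S, hSA, -, -, h0S, rfl⟩ := hB
  obtain ⟨a, haA, s, hsS, rfl⟩ := hx
  have hs0 : s ≠ 0 := fun h => h0S (h ▸ hsS)
  refine ⟨s, hSA hsS, hs0, ?_, 1, A.one_mem, s, hsS, (one_div s).symm⟩
  rwa [mul_div_cancel₀ a hs0]

theorem stmt7_general {K : Type*} [Field K] (A : Subring K)
    (hsub : ∀ B : Subring K, A ≤ B →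
      (∃ PP : Set (Ideal A), (∀ P ∈ PP, P.IsPrime) ∧
        ∀ x : K, x ∈ B ↔ ∀ P ∈ PP, x ∈ locAt A P) →
      IsLocOf (A : Set K) (B : Set K)) :
    ∀ x : K, x ∉ A → ∃ c : A, (denomIdeal A x).radical = (Ideal.span {c}).radical := by
  intro x _
  let PP : Set (Ideal A) := {P | P.IsPrime ∧ ¬ denomIdeal A x ≤ P}
  have hPP : ∀ P ∈ PP, P.IsPrime := fun P hP => hP.1
  have hxB : x ∈ sublocalization A PP hPP := fun P ⟨_, hIP⟩ => by
    obtain ⟨s, hsI, hsP⟩ := SetLike.not_le_iff_exists.mp hIP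
    exact mem_locAt_of_mul_mem hsP hsI
  have hBloc := hsub _ (le_sublocalization hPP) ⟨PP, hPP, fun _ => Iff.rfl⟩
  obtain ⟨s, hsA, hs0, hsI, hsB⟩ := hBloc.exists_mul_mem_inv_mem hxB
  refine ⟨⟨s, hsA⟩, Ideal.radical_eq_radical_span_singleton_of_forall_isPrime hsI ?_⟩
  intro P hP hsP
  by_contra hIP
  exact notMem_of_inv_mem_locAt hs0 (hsB P ⟨hP, hIP⟩) hsP

theorem stmt7 {K : Type*} [Field K] (A : Subring K)
    (hfrac : ∀ x : K, ∃ a b : A, (b : K) ≠ 0 ∧ x = (a : K) / (b : K))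
    (hsub : ∀ B : Subring K, A ≤ B →
      (∃ PP : Set (Ideal A), (∀ P ∈ PP, P.IsPrime) ∧
        ∀ x : K, x ∈ B ↔ ∀ P ∈ PP, x ∈ locAt A P) →
      IsLocOf (A : Set K) (B : Set K)) :
    ∀ x : K, x ∉ A → ∃ c : A, (denomIdeal A x).radical = (Ideal.span {c}).radical :=
  stmt7_general A hsub
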